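/- arXiv:math/0205265 — 3 statements merged into one kernel-verified Lean document; each statement's English description precedes it below -/
import Mathlib

section
/- Fix t ∈ ℝ and θ ∈ (0, π). Define u by e^u = cosh t − cos θ · sinh t (which is strictly positive), and θ' ∈ (0,π) by cos θ' = (cos θ · cosh t − sinh t)/(cosh t − cos θ · sinh t). Then the map θ ↦ θ' is well-defined (the right-hand side lies in (−1,1)), and the family of operators I_ν(t) defined on functions f on (0,π) by (I_ν(t) f)(θ) = (cosh t − cos θ sinh t)^{−ν} f(θ') satisfies the one-parameter group law I_ν(s) ∘ I_ν(t) = I_ν(s+t). -/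
open Real Set

/-- The transformed angle `θ'` with
`cos θ' = (cos θ cosh t − sinh t)/(cosh t − cos θ sinh t)`. -/
noncomputable def thetaMap (t θ : ℝ) : ℝ :=
  Real.arccos ((Real.cos θ * Real.cosh t - Real.sinh t) / (Real.cosh t - Real.cos θ * Real.sinh t))

/-- The operator `I_ν(t)` of the spherical nonunitary principal series, restricted
to the last spherical coordinate: `(I_ν(t) f)(θ) = (cosh t − cos θ sinh t)^{−ν} f(θ')`. -/
noncomputable def Iop (ν : ℂ) (t : ℝ) (f : ℝ → ℂ) : ℝ → ℂ :=
  fun θ => (((Real.cosh t - Real.cos θ * Real.sinh t : ℝ) : ℂ) ^ (-ν)) * f (thetaMap t θ)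

private lemma aux_pos (t θ : ℝ) : 0 < Real.cosh t - Real.cos θ * Real.sinh t := by
  have h1 : 0 < Real.cosh t - Real.sinh t := by
    rw [Real.cosh_sub_sinh]; exact Real.exp_pos _
  have h2 : 0 < Real.cosh t + Real.sinh t := by
    rw [Real.cosh_add_sinh]; exact Real.exp_pos _
  have hc1 : Real.cos θ ≤ 1 := Real.cos_le_one θ
  have hc2 : -1 ≤ Real.cos θ := Real.neg_one_le_cos θ
  rcases le_or_gt 0 (Real.sinh t) with h | h <;> nlinarith

private lemma aux_cos_lt (θ : ℝ) (hθ : θ ∈ Ioo 0 π) :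
    -1 < Real.cos θ ∧ Real.cos θ < 1 := by
  constructor
  · have := Real.cos_lt_cos_of_nonneg_of_le_pi (by linarith [hθ.1] : (0:ℝ) ≤ θ)
      le_rfl hθ.2
    simpa [Real.cos_pi] using this
  · have := Real.cos_lt_cos_of_nonneg_of_le_pi le_rfl (le_of_lt hθ.2) hθ.1
    simpa using this

private lemma aux_mem (t θ : ℝ) (hθ : θ ∈ Ioo 0 π) :
    (Real.cos θ * Real.cosh t - Real.sinh t) / (Real.cosh t - Real.cos θ * Real.sinh t)
      ∈ Ioo (-1 : ℝ) 1 := by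
  have hpos := aux_pos t θ
  have h1 : 0 < Real.cosh t - Real.sinh t := by
    rw [Real.cosh_sub_sinh]; exact Real.exp_pos _
  have h2 : 0 < Real.cosh t + Real.sinh t := by
    rw [Real.cosh_add_sinh]; exact Real.exp_pos _
  obtain ⟨hc1, hc2⟩ := aux_cos_lt θ hθ
  constructor
  · rw [lt_div_iff₀ hpos]; nlinarith
  · rw [div_lt_one hpos]; nlinarith

/-- For `t ∈ ℝ` and `θ ∈ (0,π)`: the quantity `cosh t − cos θ sinh t` is strictly
positive, the expression `(cos θ cosh t − sinh t)/(cosh t − cos θ sinh t)` lies in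
`(−1,1)` (so `θ' ∈ (0,π)` is well defined), and the operators `I_ν(t)` form a
one-parameter group: `I_ν(s) ∘ I_ν(t) = I_ν(s+t)`. -/
theorem Iop_one_parameter_group (ν : ℂ) :
    (∀ (t θ : ℝ), θ ∈ Ioo 0 π → 0 < Real.cosh t - Real.cos θ * Real.sinh t) ∧
    (∀ (t θ : ℝ), θ ∈ Ioo 0 π →
      (Real.cos θ * Real.cosh t - Real.sinh t) / (Real.cosh t - Real.cos θ * Real.sinh t)
        ∈ Ioo (-1 : ℝ) 1) ∧
    (∀ (s t : ℝ) (f : ℝ → ℂ) (θ : ℝ), θ ∈ Ioo 0 π →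
      Iop ν s (Iop ν t f) θ = Iop ν (s + t) f θ) := by
  refine ⟨fun t θ _ => aux_pos t θ, fun t θ hθ => aux_mem t θ hθ, ?_⟩
  intro s t f θ hθ
  have hDs := aux_pos s θ
  have hDst := aux_pos (s + t) θ
  have hmem := aux_mem s θ hθ
  have hcos : Real.cos (thetaMap s θ)
      = (Real.cos θ * Real.cosh s - Real.sinh s) / (Real.cosh s - Real.cos θ * Real.sinh s) :=
    Real.cos_arccos hmem.1.le hmem.2.le
  have hDt' : Real.cosh t - Real.cos (thetaMap s θ) * Real.sinh t
      = (Real.cosh (s + t) - Real.cos θ * Real.sinh (s + t))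
        / (Real.cosh s - Real.cos θ * Real.sinh s) := by
    rw [hcos, Real.cosh_add, Real.sinh_add]
    field_simp
    ring
  have hDt'pos : 0 < Real.cosh t - Real.cos (thetaMap s θ) * Real.sinh t := by
    rw [hDt']; exact div_pos hDst hDs
  have hmap : thetaMap t (thetaMap s θ) = thetaMap (s + t) θ := by
    show Real.arccos _ = Real.arccos _
    congr 1
    rw [eq_div_iff (ne_of_gt hDst)]
    have hne : Real.cosh t - Real.cos (thetaMap s θ) * Real.sinh t ≠ 0 := ne_of_gt hDt'pos
    rw [div_mul_eq_mul_div, div_eq_iff hne, hcos, Real.cosh_add, Real.sinh_add]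
    field_simp
    ring
  have hprod : ((Real.cosh (s + t) - Real.cos θ * Real.sinh (s + t) : ℝ) : ℂ)
      = ((Real.cosh s - Real.cos θ * Real.sinh s : ℝ) : ℂ)
        * ((Real.cosh t - Real.cos (thetaMap s θ) * Real.sinh t : ℝ) : ℂ) := by
    rw [← Complex.ofReal_mul]
    congr 1
    rw [hDt']
    field_simp
  show (((Real.cosh s - Real.cos θ * Real.sinh s : ℝ) : ℂ) ^ (-ν))
      * ((((Real.cosh t - Real.cos (thetaMap s θ) * Real.sinh t : ℝ) : ℂ) ^ (-ν))
        * f (thetaMap t (thetaMap s θ)))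
      = (((Real.cosh (s + t) - Real.cos θ * Real.sinh (s + t) : ℝ) : ℂ) ^ (-ν))
        * f (thetaMap (s + t) θ)
  rw [hmap, hprod, Complex.mul_cpow_ofReal_nonneg hDs.le hDt'pos.le, mul_assoc]
end

section
/- Let X_0 = Σ_{i=1}^n s_i ∂/∂s_i be the Euler vector field on ℝⁿ, and for λ ∈ ℂ let L^λ_X = Σ_i X^i ∂/∂x_i + λ Div(X) be the Lie derivative of degree λ. Under the change of variables from stereographic coordinates (s_1,…,s_n) to spherical coordinates (θ_1,…,θ_n), given by s_n = sin θ_1 ⋯ sin θ_n/(1 − cos θ_n) and s_{n−i} = cos θ_i sin θ_{i+1} ⋯ sin θ_n/(1 − cos θ_n) for 1 ≤ i ≤ n−1, the vector field X_0 transforms into −sin θ_n ∂/∂θ_n, and consequently L^λ_{X_0} = −sin θ_n ∂/∂θ_n − λ cos θ_n. -/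
/-!
The stereographic point depends on `θₙ` only through the scalar factor
`sin θₙ / (1 − cos θₙ) = cot (θₙ/2)`, whose derivative is `−1/(1 − cos θₙ)`. Flowing along
`−sin θₙ ∂/∂θₙ` therefore rescales every coordinate `sᵢ` at unit rate, i.e. the pushforward of
this field is the Euler field. The formula for the Lie derivative follows because the field has
the single component `−sin θₙ`, whose divergence is `−cos θₙ`.
-/

open Real Set Finset

variable (m : ℕ)

/-- The change of variables from spherical coordinates `(θ₁,…,θₙ)` to
stereographic coordinates `(s₁,…,sₙ)`, `n = m+1` (0-based indices):
`sₙ = sin θ₁ ⋯ sin θₙ/(1 − cos θₙ)` and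
`s_{n−i} = cos θᵢ sin θ_{i+1} ⋯ sin θₙ/(1 − cos θₙ)` for `1 ≤ i ≤ n−1`. -/
noncomputable def stereoOfSpherical (θ : Fin (m + 1) → ℝ) : Fin (m + 1) → ℝ :=
  fun k =>
    if k = Fin.last m then
      (∏ j, Real.sin (θ j)) / (1 - Real.cos (θ (Fin.last m)))
    else
      (Real.cos (θ ⟨m - 1 - k.val, by omega⟩) *
          ∏ j ∈ Finset.univ.filter (fun j : Fin (m + 1) => m - 1 - k.val < j.val),
            Real.sin (θ j)) /
        (1 - Real.cos (θ (Fin.last m)))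

/-- The vector field `−sin θₙ ∂/∂θₙ` in spherical coordinates. -/
noncomputable def Yfield (θ : Fin (m + 1) → ℝ) : Fin (m + 1) → ℝ :=
  fun i => if i = Fin.last m then -Real.sin (θ (Fin.last m)) else 0

/-- Partial derivative of a real-valued function. -/
noncomputable def pdR (i : Fin (m + 1)) (g : (Fin (m + 1) → ℝ) → ℝ)
    (θ : Fin (m + 1) → ℝ) : ℝ := fderiv ℝ g θ (Pi.single i 1)

/-- Partial derivative of a complex-valued function. -/
noncomputable def pdC (i : Fin (m + 1)) (f : (Fin (m + 1) → ℝ) → ℂ)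
    (θ : Fin (m + 1) → ℝ) : ℂ := fderiv ℝ f θ (Pi.single i 1)

theorem hasDerivAt_sin_div_one_sub_cos {t : ℝ} (ht : cos t ≠ 1) :
    HasDerivAt (fun t => sin t / (1 - cos t)) (-(1 - cos t)⁻¹) t := by
  have hden : 1 - cos t ≠ 0 := sub_ne_zero.2 (Ne.symm ht)
  refine ((hasDerivAt_sin t).div ((hasDerivAt_cos t).const_sub 1) hden).congr_deriv ?_
  field_simp
  linear_combination -sin_sq_add_cos_sq t

theorem add_smul_single_eq_update {ι : Type*} [DecidableEq ι] (x : ι → ℝ) (i : ι) (t : ℝ) :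
    x + t • Pi.single i 1 = Function.update x i (x i + t) := by
  ext j
  rcases eq_or_ne j i with rfl | hj <;> simp [*]

theorem stereoOfSpherical_update_last (θ : Fin (m + 1) → ℝ) :
    ∃ C : Fin (m + 1) → ℝ, ∀ t, stereoOfSpherical m (Function.update θ (Fin.last m) t) =
      (sin t / (1 - cos t)) • C := by
  refine ⟨fun k => if k = Fin.last m then ∏ j ∈ univ \ {Fin.last m}, sin (θ j) else
    cos (θ ⟨m - 1 - k.val, by omega⟩) *
      ∏ j ∈ univ.filter (fun j : Fin (m + 1) => m - 1 - k.val < j.val) \ {Fin.last m}, sin (θ j),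
    fun t => ?_⟩
  have hprod : ∀ s : Finset (Fin (m + 1)), Fin.last m ∈ s →
      ∏ j ∈ s, sin (Function.update θ (Fin.last m) t j) =
        sin t * ∏ j ∈ s \ {Fin.last m}, sin (θ j) := by
    intro s hs
    simp_rw [Function.apply_update (fun _ => sin)]
    exact prod_update_of_mem hs _ _
  ext k
  simp only [stereoOfSpherical, Pi.smul_apply, smul_eq_mul, Function.update_self]
  split_ifs with hk
  · rw [hprod _ (mem_univ _)]
    ring
  · rw [hprod _ (by simp; omega), Function.update_of_ne (by simp [Fin.ext_iff]; omega)]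
    ring

theorem differentiableAt_stereoOfSpherical {θ : Fin (m + 1) → ℝ}
    (h : cos (θ (Fin.last m)) ≠ 1) : DifferentiableAt ℝ (stereoOfSpherical m) θ := by
  have hden : 1 - cos (θ (Fin.last m)) ≠ 0 := sub_ne_zero.2 (Ne.symm h)
  refine differentiableAt_pi.2 fun k => ?_
  unfold stereoOfSpherical
  split_ifs <;> fun_prop (disch := exact hden)

theorem Yfield_eq (θ : Fin (m + 1) → ℝ) :
    Yfield m θ = -sin (θ (Fin.last m)) • Pi.single (Fin.last m) 1 := by
  ext i
  rcases eq_or_ne i (Fin.last m) with rfl | hi <;> simp [Yfield, *]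

theorem fderiv_stereoOfSpherical_Yfield {θ : Fin (m + 1) → ℝ} (h : cos (θ (Fin.last m)) ≠ 1) :
    fderiv ℝ (stereoOfSpherical m) θ (Yfield m θ) = stereoOfSpherical m θ := by
  obtain ⟨C, hC⟩ := stereoOfSpherical_update_last m θ
  have hline : HasLineDerivAt ℝ (stereoOfSpherical m) (-(1 - cos (θ (Fin.last m)))⁻¹ • C) θ
      (Pi.single (Fin.last m) 1) := by
    unfold HasLineDerivAt
    simp_rw [add_smul_single_eq_update, hC]
    have hq := hasDerivAt_sin_div_one_sub_cos h
    rw [← add_zero (θ (Fin.last m))] at hq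
    simpa only [add_zero] using (hq.comp_const_add _ _).smul_const C
  have hderiv := ((differentiableAt_stereoOfSpherical m h).hasFDerivAt.hasLineDerivAt _).unique hline
  have hval := hC (θ (Fin.last m))
  rw [Function.update_eq_self] at hval
  rw [Yfield_eq, map_smul, hderiv, hval, smul_smul]
  congr 1
  field_simp [sub_ne_zero.2 (Ne.symm h)]

theorem pdR_comp_apply {g : ℝ → ℝ} {g' : ℝ} (i : Fin (m + 1)) (θ : Fin (m + 1) → ℝ)
    (hg : HasDerivAt g g' (θ i)) : pdR m i (fun x => g (x i)) θ = g' := by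
  have hcomp : HasFDerivAt (fun x => g (x i)) (g' • ContinuousLinearMap.proj i) θ :=
    hg.comp_hasFDerivAt θ (hasFDerivAt_apply (𝕜 := ℝ) i θ)
  simp [pdR, hcomp.fderiv]

theorem sum_pdR_Yfield (θ : Fin (m + 1) → ℝ) :
    ∑ i, pdR m i (fun x => Yfield m x i) θ = -cos (θ (Fin.last m)) := by
  rw [Fintype.sum_eq_single (Fin.last m) fun i hi => ?_]
  · simp only [Yfield, if_true]
    exact pdR_comp_apply m _ θ (hasDerivAt_sin _).neg
  · simp [Yfield, hi, pdR]

theorem sum_Yfield_mul (θ : Fin (m + 1) → ℝ) (c : Fin (m + 1) → ℂ) :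
    ∑ i, (Yfield m θ i : ℂ) * c i = -(sin (θ (Fin.last m)) : ℂ) * c (Fin.last m) := by
  rw [Fintype.sum_eq_single (Fin.last m) fun i hi => by simp [Yfield, hi]]
  simp [Yfield]

theorem euler_field_spherical (lam : ℂ) (θ : Fin (m + 1) → ℝ)
    (hθ : ∀ i, θ i ∈ Ioo 0 π) :
    (fderiv ℝ (stereoOfSpherical m) θ
        ((-Real.sin (θ (Fin.last m))) • (Pi.single (Fin.last m) 1 : Fin (m + 1) → ℝ))
      = stereoOfSpherical m θ) ∧
    (∀ f : (Fin (m + 1) → ℝ) → ℂ, DifferentiableAt ℝ f θ →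
      (∑ i, (Yfield m θ i : ℂ) * pdC m i f θ)
          + lam * (∑ i, (pdR m i (fun x => Yfield m x i) θ : ℂ)) * f θ
        = -(Real.sin (θ (Fin.last m)) : ℂ) * pdC m (Fin.last m) f θ
            - lam * (Real.cos (θ (Fin.last m)) : ℂ) * f θ) := by
  have hcos : cos (θ (Fin.last m)) ≠ 1 := by
    simpa using (cos_lt_cos_of_nonneg_of_le_pi le_rfl (hθ (Fin.last m)).2.le (hθ _).1).ne
  refine ⟨by rw [← Yfield_eq]; exact fderiv_stereoOfSpherical_Yfield m hcos, fun f _ => ?_⟩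
  rw [sum_Yfield_mul, ← Complex.ofReal_sum, sum_pdR_Yfield]
  push_cast
  ring
end

section
/- For the case n = 1: the divergence cocycle condition reduces to the system (α−1) sin θ = (1+cos θ) φ'(θ) and (α−1) cos θ = −sin θ · φ'(θ) for θ ∈ (0,π). This system has a solution (α, φ) with φ smooth if and only if α = 1, and then φ is constant. -/
open Real Set

lemma aux_alpha_eq_one (α : ℝ) (φ : ℝ → ℝ)
    (hsys : ∀ θ ∈ Ioo 0 π,
        (α - 1) * Real.sin θ = (1 + Real.cos θ) * deriv φ θ ∧
        (α - 1) * Real.cos θ = -Real.sin θ * deriv φ θ) : α = 1 := by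
  have hmem : (π/2 : ℝ) ∈ Ioo 0 π := ⟨by positivity, by linarith [Real.pi_pos]⟩
  obtain ⟨h1, h2⟩ := hsys _ hmem
  rw [Real.sin_pi_div_two, Real.cos_pi_div_two] at h1 h2
  have : deriv φ (π/2) = 0 := by linarith
  rw [this] at h1; linarith

lemma aux_deriv_zero (α : ℝ) (φ : ℝ → ℝ)
    (hsys : ∀ θ ∈ Ioo 0 π,
        (α - 1) * Real.sin θ = (1 + Real.cos θ) * deriv φ θ ∧
        (α - 1) * Real.cos θ = -Real.sin θ * deriv φ θ) :
    ∀ θ ∈ Ioo 0 π, deriv φ θ = 0 := by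
  have hα := aux_alpha_eq_one α φ hsys
  intro θ hθ
  obtain ⟨h1, h2⟩ := hsys θ hθ
  have hs : Real.sin θ ≠ 0 := ne_of_gt (Real.sin_pos_of_pos_of_lt_pi hθ.1 hθ.2)
  have : Real.sin θ * deriv φ θ = 0 := by
    subst hα; nlinarith [Real.sin_sq_add_cos_sq θ]
  exact (mul_eq_zero.1 this).resolve_left hs

/-- For `n = 1`, the divergence-cocycle system
`(α−1) sin θ = (1+cos θ) φ'(θ)` and `(α−1) cos θ = −sin θ · φ'(θ)` on `(0,π)`
has a differentiable solution `φ` if and only if `α = 1`, and in that case `φ`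
is constant on `(0,π)`. -/
theorem divergence_cocycle_n_eq_one (α : ℝ) :
    ((∃ φ : ℝ → ℝ, (∀ θ ∈ Ioo 0 π, DifferentiableAt ℝ φ θ) ∧
        ∀ θ ∈ Ioo 0 π,
          (α - 1) * Real.sin θ = (1 + Real.cos θ) * deriv φ θ ∧
          (α - 1) * Real.cos θ = -Real.sin θ * deriv φ θ)
      ↔ α = 1) ∧
    (∀ φ : ℝ → ℝ, (∀ θ ∈ Ioo 0 π, DifferentiableAt ℝ φ θ) →
      (∀ θ ∈ Ioo 0 π,
        (α - 1) * Real.sin θ = (1 + Real.cos θ) * deriv φ θ ∧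
        (α - 1) * Real.cos θ = -Real.sin θ * deriv φ θ) →
      ∀ θ₁ ∈ Ioo 0 π, ∀ θ₂ ∈ Ioo 0 π, φ θ₁ = φ θ₂) := by
  constructor
  · constructor
    · rintro ⟨φ, _, hsys⟩
      exact aux_alpha_eq_one α φ hsys
    · intro hα
      refine ⟨fun _ => 0, fun θ _ => differentiableAt_const 0, fun θ hθ => ?_⟩
      simp [hα]
  · intro φ hdiff hsys θ₁ hθ₁ θ₂ hθ₂
    have hz := aux_deriv_zero α φ hsys
    have := Convex.norm_image_sub_le_of_norm_deriv_le (C := 0) hdiff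
      (fun x hx => by simp [hz x hx]) (convex_Ioo 0 π) hθ₂ hθ₁
    simp only [zero_mul, norm_le_zero_iff, sub_eq_zero] at this
    exact this
end
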